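/- Let (F_n) be a linear-like semiring family of graphs. Then for every finite simple graph G, the fractional F-number is bounded above by the asymptotic F-number: η_F^frac(G) ≤ η_F^asymp(G). -/

import Mathlib

open SimpleGraph

universe u v

/-- The join `G + H` of two simple graphs. -/
def graphJoin {α : Type u} {β : Type v} (G : SimpleGraph α) (H : SimpleGraph β) :
    SimpleGraph (α ⊕ β) where
  Adj x y :=
    match x, y with
    | Sum.inl a, Sum.inl a' => G.Adj a a'
    | Sum.inr b, Sum.inr b' => H.Adj b b'
    | Sum.inl _, Sum.inr _ => True
    | Sum.inr _, Sum.inl _ => True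
  symm := ⟨by
    rintro (a | b) (a' | b') h
    · exact G.adj_symm h
    · trivial
    · trivial
    · exact H.adj_symm h⟩
  loopless := ⟨by
    rintro (a | b) h
    · exact G.irrefl h
    · exact H.irrefl h⟩

/-- The disjunctive product `G * H`. -/
def disjProd {α : Type u} {β : Type v} (G : SimpleGraph α) (H : SimpleGraph β) :
    SimpleGraph (α × β) where
  Adj p q := G.Adj p.1 q.1 ∨ H.Adj p.2 q.2
  symm := ⟨fun p q h => h.imp (fun h' => G.adj_symm h') (fun h' => H.adj_symm h')⟩
  loopless := ⟨fun p h => h.elim (fun h' => G.irrefl h') (fun h' => H.irrefl h')⟩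

/-- The lexicographic product `G ⋉ H`. -/
def lexProd {α : Type u} {β : Type v} (G : SimpleGraph α) (H : SimpleGraph β) :
    SimpleGraph (α × β) where
  Adj p q := G.Adj p.1 q.1 ∨ (p.1 = q.1 ∧ H.Adj p.2 q.2)
  symm := ⟨fun p q h => h.imp (fun h' => G.adj_symm h') (fun h' => ⟨h'.1.symm, H.adj_symm h'.2⟩)⟩
  loopless := ⟨fun p h => h.elim (fun h' => G.irrefl h') (fun h' => H.irrefl h'.2)⟩

/-- The `d`-fold blowup `G ⋉ d`, i.e. the lexicographic product `G ⋉ K_d`. -/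
def blowup {α : Type u} (G : SimpleGraph α) (d : ℕ) : SimpleGraph (α × Fin d) :=
  lexProd G (⊤ : SimpleGraph (Fin d))

/-- The `d`-fractionalization `G/d`: the graph of `d`-cliques of `G`, with two
`d`-cliques adjacent iff they are disjoint and pairwise adjacent. -/
def fracGraph {α : Type u} (G : SimpleGraph α) (d : ℕ) :
    SimpleGraph {S : Finset α // S.card = d ∧ G.IsClique (S : Set α)} where
  Adj S T := S ≠ T ∧ Disjoint S.val T.val ∧ ∀ a ∈ S.val, ∀ b ∈ T.val, G.Adj a b
  symm := ⟨by
    rintro S T ⟨hne, hd, hadj⟩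
    exact ⟨hne.symm, hd.symm, fun b hb a ha => (hadj a ha b hb).symm⟩⟩
  loopless := ⟨fun S h => h.1 rfl⟩

/-- The `n`-fold disjunctive power `G^{*n}`. -/
def disjPow {α : Type u} (G : SimpleGraph α) (n : ℕ) :
    SimpleGraph (Fin n → α) where
  Adj f g := ∃ i, G.Adj (f i) (g i)
  symm := ⟨fun f g ⟨i, h⟩ => ⟨i, h.symm⟩⟩
  loopless := ⟨fun f ⟨i, h⟩ => G.irrefl h⟩

/-- A semiring family of graphs. -/
structure SemiringFamily where
  V : ℕ → Type u
  F : ∀ n, SimpleGraph (V n)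
  isEmpty_zero : IsEmpty (V 0)
  nonempty_one : Nonempty (V 1)
  add_hom : ∀ n m : ℕ, Nonempty (graphJoin (F n) (F m) →g F (n + m))
  mul_hom : ∀ n m : ℕ, Nonempty (disjProd (F n) (F m) →g F (n * m))

/-- The `F`-number: the least `n` such that `G → F_n`. -/
noncomputable def etaF (F : SemiringFamily.{u}) {α : Type v} (G : SimpleGraph α) : ℕ :=
  sInf {n : ℕ | Nonempty (G →g F.F n)}

/-- The fractional `F`-number. -/
noncomputable def etaFrac (F : SemiringFamily.{u}) {α : Type v} (G : SimpleGraph α) : ℝ :=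
  sInf {x : ℝ | ∃ n d : ℕ, 1 ≤ d ∧ Nonempty (G →g fracGraph (F.F n) d) ∧ x = (n : ℝ) / d}

/-- The asymptotic `F`-number. -/
noncomputable def etaAsymp (F : SemiringFamily.{u}) {α : Type v} (G : SimpleGraph α) : ℝ :=
  sInf {x : ℝ | ∃ n : ℕ, 1 ≤ n ∧ x = (etaF F (disjPow G n) : ℝ) ^ ((1 : ℝ) / n)}

/-- The orthogonal complement of a set of vertices. -/
def perp {α : Type u} (G : SimpleGraph α) (S : Set α) : Set α :=
  {v | ∀ s ∈ S, G.Adj v s}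

/-- A flat is a set of vertices with `S^{⊥⊥} = S`. -/
def IsFlat {α : Type u} (G : SimpleGraph α) (S : Set α) : Prop :=
  perp G (perp G S) = S

/-- Homomorphic equivalence of two graphs. -/
def HomEquiv {α : Type u} {β : Type v} (G : SimpleGraph α) (H : SimpleGraph β) : Prop :=
  Nonempty (G →g H) ∧ Nonempty (H →g G)

/-- A linear-like semiring family: every flat of `F_n` induces a subgraph with some
clique number `k`, homomorphically equivalent to `F_k`. -/
structure LinearLikeFamily extends SemiringFamily where
  linearLike : ∀ n (S : Set (V n)), IsFlat (F n) S →
    ∃ k : ℕ, (∃ s : Finset S, ((F n).induce S).IsNClique k s) ∧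
      (∀ s : Finset S, ¬ ((F n).induce S).IsNClique (k + 1) s) ∧
      HomEquiv ((F n).induce S) (F k)

/-!
Let `φ : G^{*(n+1)} → F_m` with `m = η_F(G^{*(n+1)})`. For a vertex `v` of `G`, the flat `S_v`
spanned by `φ({v} × G^{*n})` receives `G^{*n}`; since `F` is linear-like, `F_m` restricted to
`S_v` maps to `F_k` where `k` is its clique number, so `S_v` contains a clique of size
`η_F(G^{*n})`. The flats of adjacent vertices are completely joined, hence these cliques form a
homomorphism `G → F_m / η_F(G^{*n})`. Thus `η^frac(G) · η_F(G^{*n}) ≤ η_F(G^{*(n+1)})`, and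
telescoping gives `η^frac(G)^n ≤ η_F(G^{*n})`.
-/

section Perp

variable {V : Type*} {G : SimpleGraph V} {X Y : Set V}

variable (G) in
lemma perp_subset_perp (h : X ⊆ Y) : perp G Y ⊆ perp G X :=
  fun _ hv s hs => hv s (h hs)

lemma subset_perp_comm : X ⊆ perp G Y ↔ Y ⊆ perp G X :=
  ⟨fun h y hy _ hx => (h hx y hy).symm, fun h x hx _ hy => (h hy x hx).symm⟩

variable (G) in
lemma subset_perp_perp (X : Set V) : X ⊆ perp G (perp G X) :=
  subset_perp_comm.1 subset_rfl

variable (G) in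
lemma isFlat_perp (Y : Set V) : IsFlat G (perp G Y) :=
  (perp_subset_perp G (subset_perp_perp G Y)).antisymm (subset_perp_perp G _)

lemma perp_perp_subset_perp (h : X ⊆ perp G Y) : perp G (perp G X) ⊆ perp G Y :=
  perp_subset_perp G (subset_perp_comm.1 h)

lemma perp_perp_subset_perp_perp_perp (h : X ⊆ perp G Y) :
    perp G (perp G X) ⊆ perp G (perp G (perp G Y)) :=
  subset_perp_comm.1 (perp_perp_subset_perp (subset_perp_comm.1 (perp_perp_subset_perp h)))

end Perp

section Homs

variable {α β : Type*}

def SimpleGraph.Hom.codRestrict {G : SimpleGraph α} {H : SimpleGraph β} (φ : G →g H)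
    {S : Set β} (hS : ∀ a, φ a ∈ S) : G →g H.induce S where
  toFun a := ⟨φ a, hS a⟩
  map_rel' h := φ.map_rel h

def disjProd.sectionHom (G : SimpleGraph α) (H : SimpleGraph β) (a : α) :
    H →g disjProd G H where
  toFun b := (a, b)
  map_rel' h := Or.inr h

def disjPow.consHom (G : SimpleGraph α) (n : ℕ) :
    disjProd G (disjPow G n) →g disjPow G (n + 1) where
  toFun p := Fin.cons p.1 p.2
  map_rel' := by
    rintro ⟨a, f⟩ ⟨b, g⟩ (h | ⟨i, h⟩)
    · exact ⟨0, h⟩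
    · exact ⟨i.succ, h⟩

def fracGraph.homOfCliques {G : SimpleGraph α} {H : SimpleGraph β} {d : ℕ} (hd : d ≠ 0)
    (C : α → Finset β) (hC : ∀ a, H.IsNClique d (C a))
    (hadj : ∀ a b, G.Adj a b → ∀ x ∈ C a, ∀ y ∈ C b, H.Adj x y) :
    G →g fracGraph H d where
  toFun a := ⟨C a, (hC a).card_eq, (hC a).isClique⟩
  map_rel' {a b} h := by
    have hdisj : Disjoint (C a) (C b) :=
      Finset.disjoint_left.2 fun x hxa hxb => H.irrefl (hadj a b h x hxa x hxb)
    refine ⟨fun heq => ?_, hdisj, hadj a b h⟩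
    have hCa : (C a).Nonempty := Finset.card_ne_zero.1 ((hC a).card_eq ▸ hd)
    rw [show C b = C a from (congrArg Subtype.val heq).symm, Finset.disjoint_self_iff_empty] at hdisj
    exact hCa.ne_empty hdisj

lemma exists_isNClique_subset_of_induce {G : SimpleGraph α} {S : Set α} {k r : ℕ}
    {s : Finset S} (hs : (G.induce S).IsNClique k s) (hr : r ≤ k) :
    ∃ C : Finset α, G.IsNClique r C ∧ ↑C ⊆ S := by
  rw [isNClique_induce_iff] at hs
  obtain ⟨t, hts, htc⟩ := Finset.exists_subset_card_eq (hr.trans hs.card_eq.ge)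
  refine ⟨t, ⟨hs.isClique.subset (by exact_mod_cast hts), htc⟩, fun x hx => ?_⟩
  obtain ⟨y, -, rfl⟩ := Finset.mem_map.1 (hts hx)
  exact y.2

end Homs

section EtaF

variable {α : Type*} (F : SemiringFamily.{u}) {G : SimpleGraph α} {N : ℕ}

lemma etaF_le_of_hom (φ : G →g F.F N) : etaF F G ≤ N :=
  Nat.sInf_le ⟨φ⟩

lemma nonempty_hom_etaF (φ : G →g F.F N) : Nonempty (G →g F.F (etaF F G)) :=
  Nat.sInf_mem (s := {n | Nonempty (G →g F.F n)}) ⟨N, ⟨φ⟩⟩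

lemma etaF_ne_zero [Nonempty α] (φ : G →g F.F N) : etaF F G ≠ 0 := fun h => by
  obtain ⟨ψ⟩ := nonempty_hom_etaF F φ
  rw [h] at ψ
  exact F.isEmpty_zero.false (ψ (Classical.arbitrary α))

lemma SemiringFamily.nonempty_top_hom (c : ℕ) :
    Nonempty ((⊤ : SimpleGraph (Fin c)) →g F.F c) := by
  induction c with
  | zero => exact ⟨default⟩
  | succ c ih =>
    obtain ⟨ψ⟩ := ih
    obtain ⟨j⟩ := F.add_hom c 1
    obtain ⟨x⟩ := F.nonempty_one
    refine ⟨j.comp ⟨Fin.lastCases (Sum.inr x) (fun i => Sum.inl (ψ i)), fun {a b} hab => ?_⟩⟩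
    induction a using Fin.lastCases <;> induction b using Fin.lastCases <;>
      simp_all [graphJoin, ψ.map_adj]

lemma SemiringFamily.exists_hom [Finite α] (G : SimpleGraph α) :
    ∃ N, Nonempty (G →g F.F N) := by
  obtain ⟨ψ⟩ := F.nonempty_top_hom (Nat.card α)
  exact ⟨_, ⟨ψ.comp ((Iso.completeGraph (Finite.equivFin α)).toHom.comp (Hom.ofLE le_top))⟩⟩

lemma etaF_pos [Finite α] [Nonempty α] (G : SimpleGraph α) : 0 < etaF F G := by
  obtain ⟨N, ⟨φ⟩⟩ := F.exists_hom G
  exact Nat.pos_of_ne_zero (etaF_ne_zero F φ)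

end EtaF

lemma pow_le_of_mul_le_succ {R : Type*} [Semiring R] [PartialOrder R] [IsOrderedRing R]
    {x : R} {a : ℕ → R} (hx : 0 ≤ x) (h0 : 1 ≤ a 0) (h : ∀ k, x * a k ≤ a (k + 1)) :
    ∀ n, x ^ n ≤ a n
  | 0 => by simpa using h0
  | n + 1 => by
    rw [pow_succ']
    exact (mul_le_mul_of_nonneg_left (pow_le_of_mul_le_succ hx h0 h n) hx).trans (h n)

section EtaFrac

variable {α : Type*} (F : SemiringFamily.{u}) (G : SimpleGraph α)

lemma etaFrac_nonneg : 0 ≤ etaFrac F G :=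
  Real.sInf_nonneg (by rintro _ ⟨n, d, -, -, rfl⟩; positivity)

lemma etaAsymp_nonneg : 0 ≤ etaAsymp F G :=
  Real.sInf_nonneg (by rintro _ ⟨n, -, rfl⟩; positivity)

variable {G} in
lemma etaFrac_le_div {n d : ℕ} (hd : d ≠ 0) (φ : G →g fracGraph (F.F n) d) :
    etaFrac F G ≤ n / d :=
  csInf_le ⟨0, by rintro _ ⟨n, d, -, -, rfl⟩; positivity⟩
    ⟨n, d, Nat.one_le_iff_ne_zero.2 hd, ⟨φ⟩, rfl⟩

lemma etaFrac_of_isEmpty [IsEmpty α] : etaFrac F G = 0 :=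
  le_antisymm (by simpa using etaFrac_le_div F one_ne_zero (G := G) (n := 0) default)
    (etaFrac_nonneg F G)

end EtaFrac

namespace LinearLikeFamily

variable {α β : Type*} (F : LinearLikeFamily.{u}) {m : ℕ}

lemma exists_isNClique_etaF_of_isFlat {S : Set (F.V m)}
    (hS : IsFlat (F.F m) S) {H : SimpleGraph β} (ψ : H →g (F.F m).induce S) :
    ∃ C : Finset (F.V m), (F.F m).IsNClique (etaF F.toSemiringFamily H) C ∧ ↑C ⊆ S := by
  obtain ⟨k, ⟨s, hs⟩, -, ⟨χ⟩, -⟩ := F.linearLike m S hS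
  exact exists_isNClique_subset_of_induce hs (etaF_le_of_hom _ (χ.comp ψ))

lemma nonempty_hom_fracGraph_etaF [Nonempty α] [Nonempty β]
    (G : SimpleGraph α) (H : SimpleGraph β) (φ : disjProd G H →g F.F m) :
    Nonempty (G →g fracGraph (F.F m) (etaF F.toSemiringFamily H)) := by
  let φ' : α → (H →g F.F m) := fun a => φ.comp (disjProd.sectionHom G H a)
  let T : α → Set (F.V m) := fun a => Set.range (φ' a)
  have hT : ∀ a b, G.Adj a b → T a ⊆ perp (F.F m) (T b) := by
    rintro a b hab _ ⟨x, rfl⟩ _ ⟨y, rfl⟩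
    exact φ.map_rel (Or.inl hab)
  choose C hC hCS using fun a => F.exists_isNClique_etaF_of_isFlat (isFlat_perp _ (perp _ (T a)))
    ((φ' a).codRestrict fun x => subset_perp_perp _ (T a) (Set.mem_range_self x))
  have hr : etaF F.toSemiringFamily H ≠ 0 := etaF_ne_zero _ (φ' (Classical.arbitrary α))
  exact ⟨fracGraph.homOfCliques hr C hC fun a b hab x hx y hy =>
    perp_perp_subset_perp_perp_perp (hT a b hab) (hCS a hx) y (hCS b hy)⟩

variable [Finite α] [Nonempty α] (G : SimpleGraph α)

lemma etaFrac_mul_etaF_disjPow_le (k : ℕ) :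
    etaFrac F.toSemiringFamily G * etaF F.toSemiringFamily (disjPow G k) ≤
      etaF F.toSemiringFamily (disjPow G (k + 1)) := by
  obtain ⟨N, ⟨φ⟩⟩ := F.exists_hom (disjPow G (k + 1))
  obtain ⟨ψ⟩ := nonempty_hom_etaF _ φ
  obtain ⟨χ⟩ := F.nonempty_hom_fracGraph_etaF G (disjPow G k) (ψ.comp (disjPow.consHom G k))
  have hk := etaF_pos F.toSemiringFamily (disjPow G k)
  rw [← le_div_iff₀ (by exact_mod_cast hk)]
  exact etaFrac_le_div _ hk.ne' χ

lemma etaFrac_pow_le_etaF_disjPow (n : ℕ) :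
    etaFrac F.toSemiringFamily G ^ n ≤ etaF F.toSemiringFamily (disjPow G n) :=
  pow_le_of_mul_le_succ (a := fun n => (etaF F.toSemiringFamily (disjPow G n) : ℝ))
    (etaFrac_nonneg _ G)
    (Nat.one_le_cast.2 (etaF_pos F.toSemiringFamily (disjPow G 0)))
    (F.etaFrac_mul_etaF_disjPow_le G) n

end LinearLikeFamily

/-- For a linear-like semiring family, the fractional `F`-number is bounded above
by the asymptotic `F`-number. -/
theorem linearLike_etaFrac_le_etaAsymp (F : LinearLikeFamily.{u}) {α : Type v}
    [Fintype α] (G : SimpleGraph α) :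
    etaFrac F.toSemiringFamily G ≤ etaAsymp F.toSemiringFamily G := by
  rcases isEmpty_or_nonempty α with hα | hα
  · exact (etaFrac_of_isEmpty _ G).trans_le (etaAsymp_nonneg _ G)
  refine le_csInf ⟨_, 1, le_rfl, rfl⟩ ?_
  rintro _ ⟨n, hn, rfl⟩
  rw [one_div, Real.le_rpow_inv_iff_of_pos (etaFrac_nonneg _ G) (by positivity) (by positivity),
    Real.rpow_natCast]
  exact F.etaFrac_pow_le_etaF_disjPow G n
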